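/- (Broadcast compatibility equals the state marginal problem for Choi states) Let s, A, B be nonempty finite types, 𝓔₁ a quantum channel from s to A, and 𝓔₂ a quantum channel from s to B. There exists a quantum channel 𝓔 from s to A × B such that for every quantum state ρ on s, the partial trace of 𝓔 ρ over B equals 𝓔₁ ρ and the partial trace of 𝓔 ρ over A equals 𝓔₂ ρ, if and only if there exists a positive semidefinite matrix σ indexed by (A × B) × s such that, after canonical reindexing, the partial trace of σ over the factor B equals J(𝓔₁) and the partial trace of σ over the factor A equals J(𝓔₂). -/

import Mathlib

/-!
Everything runs through the Choi matrix. States span the whole matrix algebra, so the marginal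
conditions on states say exactly `trR ∘ 𝓔 = 𝓔₁` and `trL ∘ 𝓔 = 𝓔₂`; since the Choi matrix of a
partial trace of `𝓔` is the corresponding partial trace of `J(𝓔)` and `J` is injective, this is
the marginal problem for `σ = J(𝓔)`. Conversely, the map with Choi matrix `σ` is completely
positive by definition, and trace preserving because its `trR`-marginal is the channel `𝓔₁`.
-/

open Matrix Kronecker
open scoped ComplexOrder

noncomputable section

/-- A quantum state: positive semidefinite with unit trace. -/
def IsState {n : Type*} [Fintype n] (ρ : Matrix n n ℂ) : Prop :=
  ρ.PosSemidef ∧ ρ.trace = 1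

/-- The Choi matrix of a linear map on matrices. -/
def choi {n m : Type*} [Fintype n] [DecidableEq n]
    (𝓔 : Matrix n n ℂ →ₗ[ℂ] Matrix m m ℂ) : Matrix (m × n) (m × n) ℂ :=
  Matrix.of fun p q =>
    (1 / (Fintype.card n : ℂ)) * 𝓔 (Matrix.single p.2 q.2 1) p.1 q.1

/-- A quantum channel: trace preserving and completely positive. -/
def IsChannel {n m : Type*} [Fintype n] [DecidableEq n] [Fintype m]
    (𝓔 : Matrix n n ℂ →ₗ[ℂ] Matrix m m ℂ) : Prop :=
  (∀ ρ : Matrix n n ℂ, (𝓔 ρ).trace = ρ.trace) ∧ (choi 𝓔).PosSemidef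

/-- Partial trace over the second (right) factor. -/
def trR {a b : Type*} [Fintype b] (M : Matrix (a × b) (a × b) ℂ) : Matrix a a ℂ :=
  Matrix.of fun i j => ∑ k, M (i, k) (j, k)

/-- Partial trace over the first (left) factor. -/
def trL {a b : Type*} [Fintype a] (M : Matrix (a × b) (a × b) ℂ) : Matrix b b ℂ :=
  Matrix.of fun i j => ∑ k, M (k, i) (k, j)

/-- Partial trace over the third factor of a triple product. -/
def trC3 {a b c : Type*} [Fintype c] (M : Matrix (a × b × c) (a × b × c) ℂ) :
    Matrix (a × b) (a × b) ℂ :=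
  Matrix.of fun i j => ∑ k, M (i.1, i.2, k) (j.1, j.2, k)

section States

variable {n : Type*} [Fintype n]

lemma Matrix.PosSemidef.isState_inv_trace_smul {P : Matrix n n ℂ} (hP : P.PosSemidef)
    (htr : P.trace ≠ 0) : IsState (P.trace⁻¹ • P) :=
  ⟨hP.smul (inv_nonneg.2 hP.trace_nonneg), by rw [trace_smul, smul_eq_mul, inv_mul_cancel₀ htr]⟩

variable [DecidableEq n]

/-- Every matrix is a combination of positive semidefinite ones (the matrix algebra is a
C⋆-algebra), and every nonzero positive semidefinite matrix is a multiple of a state. -/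
lemma span_isState_eq_top : Submodule.span ℂ {ρ : Matrix n n ℂ | IsState ρ} = ⊤ := by
  open scoped MatrixOrder Matrix.Norms.L2Operator in
  refine eq_top_iff.2 (CStarAlgebra.span_nonneg.symm.le.trans (Submodule.span_le.2 ?_))
  intro P hP
  have hP : P.PosSemidef := Matrix.nonneg_iff_posSemidef.1 hP
  obtain htr | htr := eq_or_ne P.trace 0
  · rw [hP.trace_eq_zero_iff.1 htr]
    exact zero_mem _
  · rw [← smul_inv_smul₀ htr P]
    exact Submodule.smul_mem _ _ (Submodule.subset_span (hP.isState_inv_trace_smul htr))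

lemma LinearMap.ext_on_isState {m : Type*} {f g : Matrix n n ℂ →ₗ[ℂ] Matrix m m ℂ}
    (h : ∀ ρ, IsState ρ → f ρ = g ρ) : f = g :=
  LinearMap.ext_on span_isState_eq_top h

end States

section PartialTrace

variable {a b : Type*}

lemma trace_trR [Fintype a] [Fintype b] (M : Matrix (a × b) (a × b) ℂ) :
    (trR M).trace = M.trace :=
  (Fintype.sum_prod_type fun p => M p p).symm

variable (a b) in
def trRLinearMap [Fintype b] : Matrix (a × b) (a × b) ℂ →ₗ[ℂ] Matrix a a ℂ where
  toFun := trR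
  map_add' M N := by ext i j; simp [trR, Finset.sum_add_distrib]
  map_smul' c M := by ext i j; simp [trR, Finset.mul_sum]

variable (a b) in
def trLLinearMap [Fintype a] : Matrix (a × b) (a × b) ℂ →ₗ[ℂ] Matrix b b ℂ where
  toFun := trL
  map_add' M N := by ext i j; simp [trL, Finset.sum_add_distrib]
  map_smul' c M := by ext i j; simp [trL, Finset.mul_sum]

variable {s : Type*} [Fintype s] [DecidableEq s]

lemma choi_trRLinearMap_comp [Fintype b] (T : Matrix s s ℂ →ₗ[ℂ] Matrix (a × b) (a × b) ℂ) :
    choi (trRLinearMap a b ∘ₗ T) =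
      Matrix.of fun i j : a × s => ∑ k, choi T ((i.1, k), i.2) ((j.1, k), j.2) := by
  ext i j
  simp [choi, trRLinearMap, trR, Finset.mul_sum]

lemma choi_trLLinearMap_comp [Fintype a] (T : Matrix s s ℂ →ₗ[ℂ] Matrix (a × b) (a × b) ℂ) :
    choi (trLLinearMap a b ∘ₗ T) =
      Matrix.of fun i j : b × s => ∑ k, choi T ((k, i.1), i.2) ((k, j.1), j.2) := by
  ext i j
  simp [choi, trLLinearMap, trL, Finset.mul_sum]

end PartialTrace

section ChoiInverse

variable {n m : Type*} [Fintype n] [DecidableEq n] [Nonempty n]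

def ofChoi [Fintype m] (σ : Matrix (m × n) (m × n) ℂ) : Matrix n n ℂ →ₗ[ℂ] Matrix m m ℂ where
  toFun M := Matrix.of fun i j => (Fintype.card n : ℂ) * ∑ k, ∑ l, M k l * σ (i, k) (j, l)
  map_add' M N := by
    ext i j
    simp only [Matrix.of_apply, Matrix.add_apply, add_mul, Finset.sum_add_distrib, mul_add]
  map_smul' c M := by
    ext i j
    simp only [Matrix.of_apply, Matrix.smul_apply, smul_eq_mul, RingHom.id_apply, Finset.mul_sum]
    exact Finset.sum_congr rfl fun k _ => Finset.sum_congr rfl fun l _ => by ring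

lemma choi_ofChoi [Fintype m] (σ : Matrix (m × n) (m × n) ℂ) : choi (ofChoi σ) = σ := by
  have hcard : (Fintype.card n : ℂ) ≠ 0 := Nat.cast_ne_zero.2 Fintype.card_ne_zero
  ext ⟨i, k⟩ ⟨j, l⟩
  simp [choi, ofChoi, Matrix.single_apply, hcard, ite_and, Finset.sum_ite_eq]

lemma choi_injective :
    Function.Injective (choi : (Matrix n n ℂ →ₗ[ℂ] Matrix m m ℂ) → Matrix (m × n) (m × n) ℂ) := by
  have hcard : (1 / Fintype.card n : ℂ) ≠ 0 := by simp [Fintype.card_ne_zero]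
  intro T T' h
  apply Matrix.ext_linearMap
  intro k l
  refine LinearMap.ext_ring (Matrix.ext fun i j => ?_)
  exact mul_left_cancel₀ hcard (congrFun₂ h (i, k) (j, l))

end ChoiInverse

theorem broadcast_compatible_iff_choi_smp_general
    {s A B : Type*} [Fintype s] [DecidableEq s] [Nonempty s]
    [Fintype A] [Fintype B]
    (𝓔₁ : Matrix s s ℂ →ₗ[ℂ] Matrix A A ℂ)
    (𝓔₂ : Matrix s s ℂ →ₗ[ℂ] Matrix B B ℂ)
    (h₁ : IsChannel 𝓔₁) :
    (∃ 𝓔 : Matrix s s ℂ →ₗ[ℂ] Matrix (A × B) (A × B) ℂ, IsChannel 𝓔 ∧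
        ∀ ρ : Matrix s s ℂ, IsState ρ → trR (𝓔 ρ) = 𝓔₁ ρ ∧ trL (𝓔 ρ) = 𝓔₂ ρ) ↔
      ∃ σ : Matrix ((A × B) × s) ((A × B) × s) ℂ, σ.PosSemidef ∧
        (Matrix.of fun i j : A × s => ∑ k, σ ((i.1, k), i.2) ((j.1, k), j.2)) = choi 𝓔₁ ∧
        (Matrix.of fun i j : B × s => ∑ k, σ ((k, i.1), i.2) ((k, j.1), j.2)) = choi 𝓔₂ := by
  constructor
  · rintro ⟨𝓔, ⟨-, h𝓔⟩, hmarg⟩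
    have hR : trRLinearMap A B ∘ₗ 𝓔 = 𝓔₁ := LinearMap.ext_on_isState fun ρ hρ => (hmarg ρ hρ).1
    have hL : trLLinearMap A B ∘ₗ 𝓔 = 𝓔₂ := LinearMap.ext_on_isState fun ρ hρ => (hmarg ρ hρ).2
    exact ⟨choi 𝓔, h𝓔, by rw [← choi_trRLinearMap_comp, hR], by rw [← choi_trLLinearMap_comp, hL]⟩
  · rintro ⟨σ, hσ, hA, hB⟩
    have hR : trRLinearMap A B ∘ₗ ofChoi σ = 𝓔₁ :=
      choi_injective (by rw [choi_trRLinearMap_comp, choi_ofChoi, hA])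
    have hL : trLLinearMap A B ∘ₗ ofChoi σ = 𝓔₂ :=
      choi_injective (by rw [choi_trLLinearMap_comp, choi_ofChoi, hB])
    have htp (ρ : Matrix s s ℂ) : (ofChoi σ ρ).trace = ρ.trace := by
      rw [← trace_trR, ← h₁.1 ρ, ← hR]
      rfl
    exact ⟨ofChoi σ, ⟨htp, by rwa [choi_ofChoi]⟩, fun ρ _ => ⟨congr($hR ρ), congr($hL ρ)⟩⟩

/-- Broadcast compatibility of two channels with a common input equals the state
marginal problem for their Choi states. -/
theorem broadcast_compatible_iff_choi_smp
    {s A B : Type*} [Fintype s] [DecidableEq s] [Nonempty s]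
    [Fintype A] [DecidableEq A] [Nonempty A] [Fintype B] [DecidableEq B] [Nonempty B]
    (𝓔₁ : Matrix s s ℂ →ₗ[ℂ] Matrix A A ℂ)
    (𝓔₂ : Matrix s s ℂ →ₗ[ℂ] Matrix B B ℂ)
    (h₁ : IsChannel 𝓔₁) (h₂ : IsChannel 𝓔₂) :
    (∃ 𝓔 : Matrix s s ℂ →ₗ[ℂ] Matrix (A × B) (A × B) ℂ, IsChannel 𝓔 ∧
        ∀ ρ : Matrix s s ℂ, IsState ρ → trR (𝓔 ρ) = 𝓔₁ ρ ∧ trL (𝓔 ρ) = 𝓔₂ ρ) ↔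
      ∃ σ : Matrix ((A × B) × s) ((A × B) × s) ℂ, σ.PosSemidef ∧
        (Matrix.of fun i j : A × s => ∑ k, σ ((i.1, k), i.2) ((j.1, k), j.2)) = choi 𝓔₁ ∧
        (Matrix.of fun i j : B × s => ∑ k, σ ((k, i.1), i.2) ((k, j.1), j.2)) = choi 𝓔₂ :=
  broadcast_compatible_iff_choi_smp_general 𝓔₁ 𝓔₂ h₁
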